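/- arXiv:2007.01891 — 7 statements merged into one kernel-verified Lean document; each statement's English description precedes it below -/
import Mathlib

section
/- For a finite episodic MDP, the maximum over q ∈ Δ(P) of the linear objective Σ_{h=1}^H Σ_{x,a,x'} q_h(x,a,x') r(x,a) equals Σ_{x∈S} α(x) V*_1(x), where V* is the optimal value function. In particular the linear program over the polytope Δ(P) attains the optimal expected total reward. -/
/-!
Let `E_h(q) = ∑ₓ (mass of q at x in stage h) · V*_h(x)`. For `q` consistent with `P`, the stage-`h`
reward equals `E_h(q) - ∑_y (inflow of q_h into y) · V*_{h+1}(y) - ∑ q_h(x,a,x') · gap_h(x,a)` with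
the Bellman gap `gap_h(x,a) = V*_h(x) - r(x,a) - ∑_y P(y|x,a) V*_{h+1}(y)`. Flow conservation turns
the middle term into `E_{h+1}(q)`, so the total reward telescopes to `∑ₓ α(x) V*_1(x)` minus the
`q`-weighted gap. The gap is nonnegative by the Bellman equation, and the occupancy measure of a
greedy policy puts no mass where it is positive.
-/

open Finset

namespace EpisodicMDP

variable {S A : Type*} [Fintype S]

def backup (r : S → A → ℝ) (P : S → A → S → ℝ) (V : S → ℝ) (x : S) (a : A) : ℝ :=
  r x a + ∑ y, P x a y * V y

lemma sum_mul_sum_mul_eq_sum_mul {p w V : S → ℝ} (hw : ∀ y, w y = p y * ∑ z, w z) :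
    (∑ z, w z) * ∑ y, p y * V y = ∑ y, w y * V y := by
  rw [mul_sum]
  exact sum_congr rfl fun y _ => by rw [hw y]; ring

lemma sum_mul_gap_eq [Fintype A] {r : S → A → ℝ} {P : S → A → S → ℝ} {q : S → A → S → ℝ}
    (hq : ∀ x a x', q x a x' = P x a x' * ∑ y, q x a y) (V W : S → ℝ) :
    ∑ x, ∑ a, ∑ x', q x a x' * (V x - backup r P W x a) =
      ∑ x, (∑ a, ∑ x', q x a x') * V x - ∑ x, ∑ a, ∑ x', q x a x' * r x a -
        ∑ y, (∑ x, ∑ a, q x a y) * W y := by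
  have hstep : ∀ x a, ∑ x', q x a x' * (V x - backup r P W x a) =
      (∑ x', q x a x') * V x - ∑ x', q x a x' * r x a - ∑ y, q x a y * W y := by
    intro x a
    rw [← sum_mul, ← sum_mul, ← sum_mul_sum_mul_eq_sum_mul (V := W) (hq x a), backup]
    ring
  simp only [hstep, sum_sub_distrib]
  congr 1
  · simp only [sum_mul]
  · simp only [sum_mul]
    exact sum_comm_cycle

theorem sum_reward_eq_sub_sum_gap [Fintype A] (H : ℕ) {α : S → ℝ} {P : S → A → S → ℝ}
    (r : S → A → ℝ) {q : ℕ → S → A → S → ℝ} (V : ℕ → S → ℝ)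
    (hinit : ∀ x, ∑ a, ∑ x', q 1 x a x' = α x)
    (hflow : ∀ h, 2 ≤ h → h ≤ H → ∀ x, ∑ a, ∑ x', q h x a x' = ∑ xm, ∑ a, q (h - 1) xm a x)
    (hcons : ∀ h, 1 ≤ h → h ≤ H → ∀ x a x', q h x a x' = P x a x' * ∑ y, q h x a y)
    (hV : ∀ x, V (H + 1) x = 0) :
    ∑ h ∈ Icc 1 H, ∑ x, ∑ a, ∑ x', q h x a x' * r x a =
      ∑ x, α x * V 1 x -
        ∑ h ∈ Icc 1 H, ∑ x, ∑ a, ∑ x', q h x a x' * (V h x - backup r P (V (h + 1)) x a) := by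
  set E : ℕ → ℝ := fun h => ∑ x, (∑ a, ∑ x', q h x a x') * V h x
  have hinflow : ∀ h ∈ Icc 1 H, ∑ y, (∑ x, ∑ a, q h x a y) * V (h + 1) y = E (h + 1) := by
    intro h hh
    obtain ⟨h1, h2⟩ := mem_Icc.mp hh
    rcases h2.eq_or_lt with rfl | hlt
    · simp [E, hV]
    · exact sum_congr rfl fun y _ => by rw [hflow (h + 1) (by omega) (by omega), Nat.add_sub_cancel]
  have hstage : ∀ h ∈ Icc 1 H,
      ∑ x, ∑ a, ∑ x', q h x a x' * (V h x - backup r P (V (h + 1)) x a) =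
        -(E (h + 1) - E h) - ∑ x, ∑ a, ∑ x', q h x a x' * r x a := by
    intro h hh
    obtain ⟨h1, h2⟩ := mem_Icc.mp hh
    rw [sum_mul_gap_eq (hcons h h1 h2), hinflow h hh]
    ring
  have hE1 : E 1 = ∑ x, α x * V 1 x := by simp only [E, hinit]
  have hE : E (H + 1) = 0 := by simp [E, hV]
  rw [sum_congr rfl hstage, sum_sub_distrib, sum_neg_distrib, ← Ico_add_one_right_eq_Icc,
    sum_Ico_sub E (by omega), hE1, hE]
  ring

/-- The state distribution at stage `h ≥ 1` under the Markov policy `π`; the value at `0` is a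
placeholder. -/
noncomputable def stateDist (α : S → ℝ) (P : S → A → S → ℝ) (π : ℕ → S → A) : ℕ → S → ℝ
  | 0 => 0
  | 1 => α
  | h + 2 => fun y => ∑ x, stateDist α P π (h + 1) x * P x (π (h + 1) x) y

lemma stateDist_nonneg {α : S → ℝ} {P : S → A → S → ℝ} (π : ℕ → S → A) (hα : ∀ x, 0 ≤ α x)
    (hP : ∀ x a y, 0 ≤ P x a y) :
    ∀ h x, 0 ≤ stateDist α P π h x
  | 0, _ => le_rfl
  | 1, x => hα x
  | h + 2, _ => sum_nonneg fun x _ => mul_nonneg (stateDist_nonneg π hα hP (h + 1) x) (hP _ _ _)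

noncomputable def policyOcc [DecidableEq A] (α : S → ℝ) (P : S → A → S → ℝ) (π : ℕ → S → A)
    (h : ℕ) (x : S) (a : A) (x' : S) : ℝ :=
  (if a = π h x then stateDist α P π h x else 0) * P x a x'

section policyOcc

variable [DecidableEq A] {α : S → ℝ} {P : S → A → S → ℝ} (π : ℕ → S → A)

lemma policyOcc_nonneg (hα : ∀ x, 0 ≤ α x) (hP : ∀ x a y, 0 ≤ P x a y) (h : ℕ) (x : S)
    (a : A) (x' : S) : 0 ≤ policyOcc α P π h x a x' := by
  unfold policyOcc
  split_ifs
  · exact mul_nonneg (stateDist_nonneg π hα hP h x) (hP x a x')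
  · simp

lemma sum_policyOcc (hP : ∀ x a, ∑ y, P x a y = 1) (h : ℕ) (x : S) (a : A) :
    ∑ x', policyOcc α P π h x a x' = if a = π h x then stateDist α P π h x else 0 := by
  simp only [policyOcc, ← mul_sum, hP, mul_one]

lemma policyOcc_eq_mul_sum (hP : ∀ x a, ∑ y, P x a y = 1) (h : ℕ) (x : S) (a : A) (x' : S) :
    policyOcc α P π h x a x' = P x a x' * ∑ y, policyOcc α P π h x a y := by
  rw [sum_policyOcc π hP, policyOcc, mul_comm]

lemma sum_sum_policyOcc [Fintype A] (hP : ∀ x a, ∑ y, P x a y = 1) (h : ℕ) (x : S) :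
    ∑ a, ∑ x', policyOcc α P π h x a x' = stateDist α P π h x := by
  simp [sum_policyOcc π hP]

lemma sum_sum_policyOcc_one [Fintype A] (hP : ∀ x a, ∑ y, P x a y = 1) (x : S) :
    ∑ a, ∑ x', policyOcc α P π 1 x a x' = α x :=
  sum_sum_policyOcc π hP 1 x

lemma sum_sum_policyOcc_of_two_le [Fintype A] (hP : ∀ x a, ∑ y, P x a y = 1) (h : ℕ) (h2 : 2 ≤ h)
    (x : S) :
    ∑ a, ∑ x', policyOcc α P π h x a x' = ∑ xm, ∑ a, policyOcc α P π (h - 1) xm a x := by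
  obtain ⟨k, rfl⟩ := Nat.exists_eq_add_of_le' h2
  rw [sum_sum_policyOcc π hP, show k + 2 - 1 = k + 1 from rfl]
  simp [policyOcc, stateDist]

lemma sum_policyOcc_mul_gap_eq_zero [Fintype A] (r : S → A → ℝ) (V W : S → ℝ) (h : ℕ)
    (hπ : ∀ x, backup r P W x (π h x) = V x) :
    ∑ x, ∑ a, ∑ x', policyOcc α P π h x a x' * (V x - backup r P W x a) = 0 := by
  refine sum_eq_zero fun x _ => sum_eq_zero fun a _ => sum_eq_zero fun x' _ => ?_
  by_cases ha : a = π h x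
  · simp [ha, hπ]
  · simp [policyOcc, ha]

end policyOcc

end EpisodicMDP

open EpisodicMDP

theorem stmt_1_general {S A : Type*} [Fintype S] [Fintype A] [Nonempty A]
    (H : ℕ)
    (α : S → ℝ) (hα0 : ∀ x, 0 ≤ α x)
    (P : S → A → S → ℝ) (hP0 : ∀ x a y, 0 ≤ P x a y) (hP1 : ∀ x a, ∑ y, P x a y = 1)
    (r : S → A → ℝ)
    (Vstar : ℕ → S → ℝ)
    (hVtop : ∀ x, Vstar (H + 1) x = 0)
    (hVrec : ∀ h, 1 ≤ h → h ≤ H → ∀ x,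
      Vstar h x = (Finset.univ : Finset A).sup' Finset.univ_nonempty
        (fun a => r x a + ∑ y, P x a y * Vstar (h + 1) y)) :
    IsGreatest
      { v : ℝ | ∃ q : ℕ → S → A → S → ℝ,
          (∀ h, 1 ≤ h → h ≤ H → ∀ x a x', 0 ≤ q h x a x') ∧
          (∀ x, ∑ a, ∑ x', q 1 x a x' = α x) ∧
          (∀ h, 2 ≤ h → h ≤ H → ∀ x,
            ∑ a, ∑ x', q h x a x' = ∑ xm, ∑ a, q (h - 1) xm a x) ∧
          (∀ h, 1 ≤ h → h ≤ H → ∀ x a x',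
            q h x a x' = P x a x' * ∑ y, q h x a y) ∧
          v = ∑ h ∈ Finset.Icc 1 H, ∑ x, ∑ a, ∑ x', q h x a x' * r x a }
      (∑ x, α x * Vstar 1 x) := by
  classical
  have hgap : ∀ h, 1 ≤ h → h ≤ H → ∀ x a, backup r P (Vstar (h + 1)) x a ≤ Vstar h x :=
    fun h h1 h2 x a => (hVrec h h1 h2 x).symm ▸ le_sup' (backup r P (Vstar (h + 1)) x) (mem_univ a)
  choose π hπ using fun h x =>
    (exists_mem_eq_sup' univ_nonempty (backup r P (Vstar (h + 1)) x)).imp fun _ => And.right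
  have hπinit := sum_sum_policyOcc_one (α := α) π hP1
  have hπflow := sum_sum_policyOcc_of_two_le (α := α) π hP1
  have hπcons := policyOcc_eq_mul_sum (α := α) π hP1
  have hgreedy : ∀ h ∈ Icc 1 H, ∀ x, backup r P (Vstar (h + 1)) x (π h x) = Vstar h x := by
    intro h hh x
    obtain ⟨h1, h2⟩ := mem_Icc.mp hh
    rw [hVrec h h1 h2 x]
    exact (hπ h x).symm
  refine ⟨⟨policyOcc α P π, fun h _ _ => policyOcc_nonneg π hα0 hP0 h, hπinit,
    fun h h2 _ => hπflow h h2, fun h _ _ => hπcons h, ?_⟩, ?_⟩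
  · rw [sum_reward_eq_sub_sum_gap H r Vstar hπinit (fun h h2 _ => hπflow h h2)
      (fun h _ _ => hπcons h) hVtop,
      sum_eq_zero fun h hh => sum_policyOcc_mul_gap_eq_zero π r _ _ h (hgreedy h hh),
      sub_zero]
  · rintro v ⟨q, hq0, hinit, hflow, hcons, rfl⟩
    rw [sum_reward_eq_sub_sum_gap H r Vstar hinit hflow hcons hVtop]
    refine sub_le_self _ (sum_nonneg fun h hh => ?_)
    obtain ⟨h1, h2⟩ := mem_Icc.mp hh
    exact sum_nonneg fun x _ => sum_nonneg fun a _ => sum_nonneg fun x' _ =>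
      mul_nonneg (hq0 h h1 h2 x a x') (sub_nonneg.mpr (hgap h h1 h2 x a))

/-- The LP over the occupancy-measure polytope `Δ(P)` attains its maximum,
and the maximal value of the expected-reward objective equals `∑ x, α x * V*₁ x`. -/
theorem stmt_1 {S A : Type*} [Fintype S] [Fintype A] [Nonempty S] [Nonempty A]
    (H : ℕ) (hH : 1 ≤ H)
    (α : S → ℝ) (hα0 : ∀ x, 0 ≤ α x) (hα1 : ∑ x, α x = 1)
    (P : S → A → S → ℝ) (hP0 : ∀ x a y, 0 ≤ P x a y) (hP1 : ∀ x a, ∑ y, P x a y = 1)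
    (r : S → A → ℝ) (hr : ∀ x a, 0 ≤ r x a ∧ r x a ≤ 1)
    (Vstar : ℕ → S → ℝ)
    (hVtop : ∀ x, Vstar (H + 1) x = 0)
    (hVrec : ∀ h, 1 ≤ h → h ≤ H → ∀ x,
      Vstar h x = (Finset.univ : Finset A).sup' Finset.univ_nonempty
        (fun a => r x a + ∑ y, P x a y * Vstar (h + 1) y)) :
    IsGreatest
      { v : ℝ | ∃ q : ℕ → S → A → S → ℝ,
          (∀ h, 1 ≤ h → h ≤ H → ∀ x a x', 0 ≤ q h x a x') ∧
          (∀ x, ∑ a, ∑ x', q 1 x a x' = α x) ∧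
          (∀ h, 2 ≤ h → h ≤ H → ∀ x,
            ∑ a, ∑ x', q h x a x' = ∑ xm, ∑ a, q (h - 1) xm a x) ∧
          (∀ h, 1 ≤ h → h ≤ H → ∀ x a x',
            q h x a x' = P x a x' * ∑ y, q h x a y) ∧
          v = ∑ h ∈ Finset.Icc 1 H, ∑ x, ∑ a, ∑ x', q h x a x' * r x a }
      (∑ x, α x * Vstar 1 x) :=
  stmt_1_general H α hα0 P hP0 hP1 r Vstar hVtop hVrec
end

section
/- Fix a stage h and (q,ε) feasible for the POLP constraints at stage h, i.e. |q_h(x,a,x') − P̂(x'|x,a) Σ_y q_h(x,a,y)| ≤ ε_h(x,a,x') and Σ_y w_i(y) ε_h(x,a,y) ≤ b_i(x,a) Σ_y q_h(x,a,y) for all i ∈ I and (x,a,x'), with q_h, ε_h ≥ 0. Then for every (x,a) with Σ_y q_h(x,a,y) > 0, the induced transition probabilities P̃^q(x'|x,a) = q_h(x,a,x') / Σ_y q_h(x,a,y) satisfy Σ_{x'} w_i(x') |P̃^q(x'|x,a) − P̂(x'|x,a)| ≤ b_i(x,a) for every i ∈ I. Conversely, if P̃ is a transition function satisfying Σ_{x'}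 w_i(x') |P̃(x'|x,a) − P̂(x'|x,a)| ≤ b_i(x,a) for all i and (x,a), and q_h : S×A×S → ℝ≥0 satisfies q_h(x,a,x') = P̃(x'|x,a) Σ_y q_h(x,a,y) for all (x,a,x'), then setting ε_h(x,a,x') = |q_h(x,a,x') − P̂(x'|x,a) Σ_y q_h(x,a,y)| makes (q_h,ε_h) satisfy the POLP constraints at stage h. -/
/-!
Write `Q = ∑ y, q y` for the mass of one state–action pair. Since `P̃ = q / Q`, the deviation
`|P̃ y - P̂ y|` is `|q y - P̂ y Q| / Q`: the aggregation constraints on `P̃` are exactly the POLP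
constraints on `(q, ε)` divided by `Q`, once `ε` dominates the deviations `|q y - P̂ y Q|`.
-/

open Finset

section

variable {S : Type*} [Fintype S]

theorem abs_div_sum_sub_eq (q P : S → ℝ) (hQ : 0 < ∑ y, q y) (y : S) :
    |q y / (∑ y, q y) - P y| = |q y - P y * ∑ y, q y| / ∑ y, q y := by
  rw [div_sub' hQ.ne', abs_div, abs_of_pos hQ, mul_comm]

theorem sum_mul_abs_div_sum_sub_le (q P ε w : S → ℝ) (β : ℝ) (hw : ∀ y, 0 ≤ w y)
    (hε : ∀ y, |q y - P y * ∑ y, q y| ≤ ε y) (hagg : ∑ y, w y * ε y ≤ β * ∑ y, q y)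
    (hQ : 0 < ∑ y, q y) :
    ∑ y, w y * |q y / (∑ y, q y) - P y| ≤ β := by
  simp_rw [abs_div_sum_sub_eq q P hQ, ← mul_div_assoc, ← sum_div]
  rw [div_le_iff₀ hQ]
  calc ∑ y, w y * |q y - P y * ∑ y, q y| ≤ ∑ y, w y * ε y := by
        gcongr with y
        exacts [hw y, hε y]
    _ ≤ β * ∑ y, q y := hagg

theorem sum_mul_abs_sub_mul_sum_eq (q Ptil P w : S → ℝ) (hq : ∀ y, 0 ≤ q y)
    (hqP : ∀ y, q y = Ptil y * ∑ y, q y) :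
    ∑ y, w y * |q y - P y * ∑ y', q y'| = (∑ y, w y * |Ptil y - P y|) * ∑ y, q y := by
  have hQ : 0 ≤ ∑ y, q y := sum_nonneg fun y _ => hq y
  rw [sum_mul]
  refine sum_congr rfl fun y _ => ?_
  rw [hqP y, ← sub_mul, abs_mul, abs_of_nonneg hQ, mul_assoc]

end

theorem stmt_3_general {S A I : Type*} [Fintype S]
    (Phat : S → A → S → ℝ)
    (w : I → S → ℝ) (hw0 : ∀ i y, 0 ≤ w i y)
    (b : I → S → A → ℝ) :
    -- Forward direction: feasible (q, ε) induces a transition function satisfying the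
    -- aggregation constraints wherever the total mass is positive.
    (∀ q ε : S → A → S → ℝ,
      (∀ x a x', 0 ≤ q x a x') →
      (∀ x a x', 0 ≤ ε x a x') →
      (∀ x a x', |q x a x' - Phat x a x' * ∑ y, q x a y| ≤ ε x a x') →
      (∀ i x a, ∑ y, w i y * ε x a y ≤ b i x a * ∑ y, q x a y) →
      ∀ x a, 0 < ∑ y, q x a y →
        ∀ i, ∑ x', w i x' * |q x a x' / (∑ y, q x a y) - Phat x a x'| ≤ b i x a) ∧
    -- Converse direction: a transition function satisfying the aggregation constraints
    -- together with any consistent nonnegative q yields a feasible (q, ε) with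
    -- ε x a x' = |q x a x' - P̂(x'|x,a) ∑_y q x a y|.
    (∀ Ptil : S → A → S → ℝ,
      (∀ x a y, 0 ≤ Ptil x a y) →
      (∀ x a, ∑ y, Ptil x a y = 1) →
      (∀ i x a, ∑ x', w i x' * |Ptil x a x' - Phat x a x'| ≤ b i x a) →
      ∀ q : S → A → S → ℝ,
        (∀ x a x', 0 ≤ q x a x') →
        (∀ x a x', q x a x' = Ptil x a x' * ∑ y, q x a y) →
        (∀ x a x', 0 ≤ |q x a x' - Phat x a x' * ∑ y, q x a y|) ∧
        (∀ x a x', |q x a x' - Phat x a x' * ∑ y, q x a y|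
            ≤ |q x a x' - Phat x a x' * ∑ y, q x a y|) ∧
        (∀ i x a, ∑ y, w i y * |q x a y - Phat x a y * ∑ y', q x a y'|
            ≤ b i x a * ∑ y, q x a y)) := by
  refine ⟨fun q ε _ _ hε hagg x a hQ i => ?_, fun Ptil _ _ hagg q hq hqP => ?_⟩
  · exact sum_mul_abs_div_sum_sub_le (q x a) (Phat x a) (ε x a) (w i) (b i x a) (hw0 i)
      (hε x a) (hagg i x a) hQ
  · refine ⟨fun _ _ _ => abs_nonneg _, fun _ _ _ => le_rfl, fun i x a => ?_⟩
    rw [sum_mul_abs_sub_mul_sum_eq (q x a) (Ptil x a) (Phat x a) (w i) (hq x a) (hqP x a)]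
    exact mul_le_mul_of_nonneg_right (hagg i x a) (sum_nonneg fun y _ => hq x a y)

/-- Equivalence between the per-stage POLP constraints on `(q, ε)` and the
aggregation constraints on the induced/underlying transition function. -/
theorem stmt_3 {S A I : Type*} [Fintype S] [Fintype A] [Fintype I] [Nonempty S] [Nonempty A]
    (Phat : S → A → S → ℝ) (hPhat0 : ∀ x a y, 0 ≤ Phat x a y)
    (hPhat1 : ∀ x a, ∑ y, Phat x a y = 1)
    (w : I → S → ℝ) (hw0 : ∀ i y, 0 ≤ w i y)
    (b : I → S → A → ℝ) (hb0 : ∀ i x a, 0 ≤ b i x a) :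
    -- Forward direction: feasible (q, ε) induces a transition function satisfying the
    -- aggregation constraints wherever the total mass is positive.
    (∀ q ε : S → A → S → ℝ,
      (∀ x a x', 0 ≤ q x a x') →
      (∀ x a x', 0 ≤ ε x a x') →
      (∀ x a x', |q x a x' - Phat x a x' * ∑ y, q x a y| ≤ ε x a x') →
      (∀ i x a, ∑ y, w i y * ε x a y ≤ b i x a * ∑ y, q x a y) →
      ∀ x a, 0 < ∑ y, q x a y →
        ∀ i, ∑ x', w i x' * |q x a x' / (∑ y, q x a y) - Phat x a x'| ≤ b i x a) ∧
    -- Converse direction: a transition function satisfying the aggregation constraints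
    -- together with any consistent nonnegative q yields a feasible (q, ε) with
    -- ε x a x' = |q x a x' - P̂(x'|x,a) ∑_y q x a y|.
    (∀ Ptil : S → A → S → ℝ,
      (∀ x a y, 0 ≤ Ptil x a y) →
      (∀ x a, ∑ y, Ptil x a y = 1) →
      (∀ i x a, ∑ x', w i x' * |Ptil x a x' - Phat x a x'| ≤ b i x a) →
      ∀ q : S → A → S → ℝ,
        (∀ x a x', 0 ≤ q x a x') →
        (∀ x a x', q x a x' = Ptil x a x' * ∑ y, q x a y) →
        (∀ x a x', 0 ≤ |q x a x' - Phat x a x' * ∑ y, q x a y|) ∧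
        (∀ x a x', |q x a x' - Phat x a x' * ∑ y, q x a y|
            ≤ |q x a x' - Phat x a x' * ∑ y, q x a y|) ∧
        (∀ i x a, ∑ y, w i y * |q x a y - Phat x a y * ∑ y', q x a y'|
            ≤ b i x a * ∑ y, q x a y)) :=
  stmt_3_general Phat w hw0 b
end

section
/- Suppose the true transition function P satisfies all the aggregation constraints: Σ_{x'∈S} w_i(x') |P(x'|x,a) − P̂(x'|x,a)| ≤ b_i(x,a) for every i ∈ I and every (x,a) ∈ S×A. Let β* be defined by the backward recursion β*_{H+1} = 0 and β*_h(x) = max_{a∈A} [ r(x,a) + CB(x,a; β*_{h+1}) + Σ_{y∈S} P̂(y|x,a) β*_{h+1}(y) ], and let V* be the optimal value function of the MDP with transition function P and reward r. Then β*_h(x) ≥ V*_h(x) for every x ∈ S and every h = 1,…,H+1. -/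
open Finset

/-! Backward induction on the stage. If `V*_{h+1} ≤ β*_{h+1}`, it suffices to compare the two
Bellman updates action by action, and the only nontrivial point is that the true one-step
expectation `P β*_{h+1}` exceeds the empirical one `P̂ β*_{h+1}` by at most the bonus. Since `P`
and `P̂` have the same mass, `Σ (P - P̂) β = Σ (P - P̂) (β - c)` for every shift `c`; any feasible
`(c, μ)` of the bonus program bounds `|β - c|` by `Σᵢ wᵢ μᵢ`, and the aggregation constraints
then bound the result by `Σᵢ bᵢ μᵢ`, in particular by its minimum. -/

theorem sum_mul_sub_sum_mul_eq_sum_sub_mul_sub {S : Type*} [Fintype S] {p q : S → ℝ}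
    (hpq : ∑ y, p y = ∑ y, q y) (f : S → ℝ) (c : ℝ) :
    ∑ y, p y * f y - ∑ y, q y * f y = ∑ y, (p y - q y) * (f y - c) := by
  simp only [sub_mul, mul_sub, sum_sub_distrib, ← sum_mul, hpq]
  ring

theorem sum_mul_sub_sum_mul_le_sum_mul {ι S : Type*} [Fintype ι] [Fintype S]
    {p q f : S → ℝ} {w : ι → S → ℝ} {b μ : ι → ℝ} {c : ℝ}
    (hpq : ∑ y, p y = ∑ y, q y) (hμ : ∀ i, 0 ≤ μ i)
    (hf : ∀ y, |f y - c| ≤ ∑ i, w i y * μ i)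
    (hb : ∀ i, ∑ y, w i y * |p y - q y| ≤ b i) :
    ∑ y, p y * f y - ∑ y, q y * f y ≤ ∑ i, b i * μ i := by
  rw [sum_mul_sub_sum_mul_eq_sum_sub_mul_sub hpq f c]
  calc ∑ y, (p y - q y) * (f y - c)
      ≤ ∑ y, |p y - q y| * ∑ i, w i y * μ i := by
        refine sum_le_sum fun y _ => ?_
        calc (p y - q y) * (f y - c) ≤ |p y - q y| * |f y - c| := by
              rw [← abs_mul]; exact le_abs_self _
          _ ≤ |p y - q y| * ∑ i, w i y * μ i :=
              mul_le_mul_of_nonneg_left (hf y) (abs_nonneg _)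
    _ = ∑ i, μ i * ∑ y, w i y * |p y - q y| := by
        simp only [mul_sum]
        rw [sum_comm]
        exact sum_congr rfl fun i _ => sum_congr rfl fun y _ => by ring
    _ ≤ ∑ i, μ i * b i := sum_le_sum fun i _ => mul_le_mul_of_nonneg_left (hb i) (hμ i)
    _ = ∑ i, b i * μ i := sum_congr rfl fun i _ => mul_comm _ _

theorem stmt_6_general {S A I : Type*} [Fintype S] [Fintype A] [Fintype I] [Nonempty A]
    (H : ℕ)
    (r : S → A → ℝ)
    (P : S → A → S → ℝ) (hP0 : ∀ x a y, 0 ≤ P x a y) (hP1 : ∀ x a, ∑ y, P x a y = 1)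
    (Phat : S → A → S → ℝ)
    (hPhat1 : ∀ x a, ∑ y, Phat x a y = 1)
    (w : I → S → ℝ)
    (b : I → S → A → ℝ)
    (CB : S → A → (S → ℝ) → ℝ)
    (hCB : ∀ (x : S) (a : A) (β : S → ℝ),
      IsLeast { v : ℝ | ∃ (c : ℝ) (μ : I → ℝ), (∀ i, 0 ≤ μ i) ∧
          (∀ x', |β x' - c| ≤ ∑ i, w i x' * μ i) ∧ v = ∑ i, b i x a * μ i }
        (CB x a β))
    -- the true transition function satisfies all the aggregation constraints:
    (hPfeas : ∀ (i : I) (x : S) (a : A),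
      ∑ x', w i x' * |P x a x' - Phat x a x'| ≤ b i x a)
    (βs : ℕ → S → ℝ)
    (hβtop : ∀ x, βs (H + 1) x = 0)
    (hβrec : ∀ h, 1 ≤ h → h ≤ H → ∀ x,
      βs h x = (Finset.univ : Finset A).sup' Finset.univ_nonempty
        (fun a => r x a + CB x a (βs (h + 1)) + ∑ y, Phat x a y * βs (h + 1) y))
    (Vstar : ℕ → S → ℝ)
    (hVtop : ∀ x, Vstar (H + 1) x = 0)
    (hVrec : ∀ h, 1 ≤ h → h ≤ H → ∀ x,
      Vstar h x = (Finset.univ : Finset A).sup' Finset.univ_nonempty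
        (fun a => r x a + ∑ y, P x a y * Vstar (h + 1) y)) :
    ∀ h, 1 ≤ h → h ≤ H + 1 → ∀ x, Vstar h x ≤ βs h x := by
  intro h h1 hh
  induction hh using Nat.decreasingInduction with
  | self => intro x; rw [hVtop, hβtop]
  | of_succ h hlt ih =>
    intro x
    have hle : h ≤ H := Nat.lt_succ_iff.mp hlt
    rw [hVrec h h1 hle x, hβrec h h1 hle x]
    refine sup'_mono_fun fun a _ => ?_
    obtain ⟨c, μ, hμ, hβc, hCBval⟩ := (hCB x a (βs (h + 1))).1
    have hshift : ∑ y, P x a y * βs (h + 1) y - ∑ y, Phat x a y * βs (h + 1) y ≤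
        CB x a (βs (h + 1)) :=
      hCBval ▸ sum_mul_sub_sum_mul_le_sum_mul ((hP1 x a).trans (hPhat1 x a).symm) hμ hβc
        fun i => hPfeas i x a
    have hmono : ∑ y, P x a y * Vstar (h + 1) y ≤ ∑ y, P x a y * βs (h + 1) y :=
      sum_le_sum fun y _ => mul_le_mul_of_nonneg_left (ih (by omega) y) (hP0 x a y)
    linarith

/-- Optimism. If the true transition function `P` satisfies all the
aggregation constraints, then the optimistic value functions `β*` dominate the optimal
value functions `V*` of the true MDP at every stage. -/
theorem stmt_6 {S A I : Type*} [Fintype S] [Fintype A] [Fintype I] [Nonempty S] [Nonempty A]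
    (H : ℕ) (hH : 1 ≤ H)
    (r : S → A → ℝ) (hr : ∀ x a, 0 ≤ r x a ∧ r x a ≤ 1)
    (P : S → A → S → ℝ) (hP0 : ∀ x a y, 0 ≤ P x a y) (hP1 : ∀ x a, ∑ y, P x a y = 1)
    (Phat : S → A → S → ℝ) (hPhat0 : ∀ x a y, 0 ≤ Phat x a y)
    (hPhat1 : ∀ x a, ∑ y, Phat x a y = 1)
    (w : I → S → ℝ) (hw0 : ∀ i y, 0 ≤ w i y) (hwpos : ∀ x' : S, ∃ i, 0 < w i x')
    (b : I → S → A → ℝ) (hb0 : ∀ i x a, 0 ≤ b i x a)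
    (CB : S → A → (S → ℝ) → ℝ)
    (hCB : ∀ (x : S) (a : A) (β : S → ℝ),
      IsLeast { v : ℝ | ∃ (c : ℝ) (μ : I → ℝ), (∀ i, 0 ≤ μ i) ∧
          (∀ x', |β x' - c| ≤ ∑ i, w i x' * μ i) ∧ v = ∑ i, b i x a * μ i }
        (CB x a β))
    -- the true transition function satisfies all the aggregation constraints:
    (hPfeas : ∀ (i : I) (x : S) (a : A),
      ∑ x', w i x' * |P x a x' - Phat x a x'| ≤ b i x a)
    (βs : ℕ → S → ℝ)
    (hβtop : ∀ x, βs (H + 1) x = 0)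
    (hβrec : ∀ h, 1 ≤ h → h ≤ H → ∀ x,
      βs h x = (Finset.univ : Finset A).sup' Finset.univ_nonempty
        (fun a => r x a + CB x a (βs (h + 1)) + ∑ y, Phat x a y * βs (h + 1) y))
    (Vstar : ℕ → S → ℝ)
    (hVtop : ∀ x, Vstar (H + 1) x = 0)
    (hVrec : ∀ h, 1 ≤ h → h ≤ H → ∀ x,
      Vstar h x = (Finset.univ : Finset A).sup' Finset.univ_nonempty
        (fun a => r x a + ∑ y, P x a y * Vstar (h + 1) y)) :
    ∀ h, 1 ≤ h → h ≤ H + 1 → ∀ x, Vstar h x ≤ βs h x :=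
  stmt_6_general H r P hP0 hP1 Phat hPhat1 w b CB hCB hPfeas βs hβtop hβrec Vstar hVtop hVrec
end

section
/- Let S be a finite set of cardinality S_card ≥ 1, let p̂ and p̃ be probability distributions on S, let β : S → [0,H] with H ≥ 0, let L > 0 and reals N ≥ 1, N' ≥ 1, and suppose that for every y ∈ S, |p̃(y) − p̂(y)| ≤ sqrt( 4 p̂(y)(1 − p̂(y)) L / N ) + 7L/(3N'). Then the variance of β under p̂ is bounded by the variance of β under p̃ as follows: Var_{p̂}(β) ≤ Var_{p̃}(β) + H² · sqrt( 4 S_card L / N ) + 9 H² S_card² L / N'. -/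
/-!
Comparing `Var_p̂(β)` with the second moment of `β` about the `p̃`-mean, which dominates it, reduces
the claim to `Var_p̂(β) ≤ Var_p̃(β) + H² ∑ |p̂ - p̃|`, since `β` and its `p̃`-mean both lie in `[0, H]`.
The `ℓ¹` distance is then bounded termwise by the hypothesis, and Cauchy–Schwarz together with
`∑ p̂ (1 - p̂) ≤ 1` turns the sum of square roots into `√(4 |S| L / N)`.
-/

open Finset

section WeightedVariance

variable {ι : Type*} [Fintype ι]

def weightedMean (p b : ι → ℝ) : ℝ := ∑ i, p i * b i

def weightedVar (p b : ι → ℝ) : ℝ := ∑ i, p i * (b i - weightedMean p b) ^ 2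

lemma sum_mul_sq_sub_eq_weightedVar_add {p : ι → ℝ} (hp : ∑ i, p i = 1) (b : ι → ℝ) (c : ℝ) :
    ∑ i, p i * (b i - c) ^ 2 = weightedVar p b + (weightedMean p b - c) ^ 2 := by
  unfold weightedVar weightedMean
  set m := ∑ i, p i * b i
  have expand : ∀ i, p i * (b i - c) ^ 2
      = p i * (b i - m) ^ 2 + 2 * (m - c) * (p i * b i) - (m - c) * (m + c) * p i :=
    fun i => by ring
  rw [sum_congr rfl fun i _ => expand i, sum_sub_distrib, sum_add_distrib, ← mul_sum,
    ← mul_sum, hp]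
  ring

lemma weightedVar_le_sum_mul_sq_sub {p : ι → ℝ} (hp : ∑ i, p i = 1) (b : ι → ℝ) (c : ℝ) :
    weightedVar p b ≤ ∑ i, p i * (b i - c) ^ 2 := by
  rw [sum_mul_sq_sub_eq_weightedVar_add hp]
  exact le_add_of_nonneg_right (sq_nonneg _)

lemma weightedMean_mem_Icc {p b : ι → ℝ} {a c : ℝ} (hp0 : ∀ i, 0 ≤ p i) (hp : ∑ i, p i = 1)
    (hb : ∀ i, b i ∈ Set.Icc a c) : weightedMean p b ∈ Set.Icc a c :=
  (convex_Icc a c).sum_mem (fun i _ => hp0 i) hp fun i _ => hb i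

lemma weightedVar_le_add_sum_abs_sub {p q b : ι → ℝ} {a c : ℝ} (hp : ∑ i, p i = 1)
    (hq0 : ∀ i, 0 ≤ q i) (hq : ∑ i, q i = 1) (hb : ∀ i, b i ∈ Set.Icc a c) :
    weightedVar p b ≤ weightedVar q b + (c - a) ^ 2 * ∑ i, |p i - q i| := by
  set m := weightedMean q b
  have hm := weightedMean_mem_Icc hq0 hq hb
  have hdev : ∀ i, (b i - m) ^ 2 ≤ (c - a) ^ 2 := fun i => by
    rw [← sq_abs]
    exact pow_le_pow_left₀ (abs_nonneg _)
      (abs_sub_le_of_le_of_le (hb i).1 (hb i).2 hm.1 hm.2) 2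
  calc weightedVar p b ≤ ∑ i, p i * (b i - m) ^ 2 := weightedVar_le_sum_mul_sq_sub hp b m
    _ = weightedVar q b + ∑ i, (p i - q i) * (b i - m) ^ 2 := by
        rw [weightedVar, ← sum_add_distrib]
        exact sum_congr rfl fun i _ => by ring
    _ ≤ weightedVar q b + ∑ i, |p i - q i| * (c - a) ^ 2 := by
        refine add_le_add le_rfl (sum_le_sum fun i _ => ?_)
        exact (mul_le_mul_of_nonneg_right (le_abs_self _) (sq_nonneg _)).trans
          (mul_le_mul_of_nonneg_left (hdev i) (abs_nonneg _))
    _ = weightedVar q b + (c - a) ^ 2 * ∑ i, |p i - q i| := by rw [← sum_mul, mul_comm]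

end WeightedVariance

lemma Real.sum_sqrt_le_sqrt_card_mul_sum {ι : Type*} (s : Finset ι) {f : ι → ℝ}
    (hf : ∀ i ∈ s, 0 ≤ f i) : ∑ i ∈ s, √(f i) ≤ √(#s * ∑ i ∈ s, f i) := by
  apply Real.le_sqrt_of_sq_le
  calc (∑ i ∈ s, √(f i)) ^ 2 ≤ #s * ∑ i ∈ s, √(f i) ^ 2 := sq_sum_le_card_mul_sum_sq
    _ = #s * ∑ i ∈ s, f i := by rw [sum_congr rfl fun i hi => Real.sq_sqrt (hf i hi)]

lemma sum_mul_one_sub_le_one {ι : Type*} (s : Finset ι) {p : ι → ℝ} (hp : ∑ i ∈ s, p i = 1) :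
    ∑ i ∈ s, p i * (1 - p i) ≤ 1 := by
  calc ∑ i ∈ s, p i * (1 - p i) ≤ ∑ i ∈ s, p i :=
        sum_le_sum fun i _ => by nlinarith [sq_nonneg (p i)]
    _ = 1 := hp

lemma sum_sqrt_bernstein_width_le {ι : Type*} [Fintype ι] {p : ι → ℝ} (hp0 : ∀ i, 0 ≤ p i)
    (hp : ∑ i, p i = 1) {L N : ℝ} (hL : 0 ≤ L) (hN : 0 ≤ N) :
    ∑ i, √(4 * p i * (1 - p i) * L / N) ≤ √(4 * Fintype.card ι * L / N) := by
  have hp1 : ∀ i, p i ≤ 1 := fun i => hp ▸ single_le_sum (fun j _ => hp0 j) (mem_univ i)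
  have hwidth : ∀ i ∈ univ, 0 ≤ 4 * p i * (1 - p i) * L / N := fun i _ => by
    have := sub_nonneg.mpr (hp1 i)
    have := hp0 i
    positivity
  refine (Real.sum_sqrt_le_sqrt_card_mul_sum univ hwidth).trans (Real.sqrt_le_sqrt ?_)
  have hsum : ∑ i, 4 * p i * (1 - p i) * L / N = 4 * L / N * ∑ i, p i * (1 - p i) := by
    rw [mul_sum]
    exact sum_congr rfl fun i _ => by ring
  rw [hsum, card_univ]
  calc (Fintype.card ι : ℝ) * (4 * L / N * ∑ i, p i * (1 - p i))
      ≤ Fintype.card ι * (4 * L / N * 1) := by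
        gcongr
        exact sum_mul_one_sub_le_one univ hp
    _ = 4 * Fintype.card ι * L / N := by ring

theorem stmt_11_general {S : Type*} [Fintype S]
    (phat ptil : S → ℝ)
    (hphat0 : ∀ y, 0 ≤ phat y) (hphat1 : ∑ y, phat y = 1)
    (hptil0 : ∀ y, 0 ≤ ptil y) (hptil1 : ∑ y, ptil y = 1)
    (H : ℝ) (β : S → ℝ) (hβ : ∀ y, 0 ≤ β y ∧ β y ≤ H)
    (L N N' : ℝ) (hL : 0 < L) (hN : 1 ≤ N) (hN' : 1 ≤ N')
    (hclose : ∀ y, |ptil y - phat y|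
      ≤ Real.sqrt (4 * phat y * (1 - phat y) * L / N) + 7 * L / (3 * N')) :
    ∑ y, phat y * (β y - ∑ y', phat y' * β y') ^ 2
      ≤ (∑ y, ptil y * (β y - ∑ y', ptil y' * β y') ^ 2)
        + H ^ 2 * Real.sqrt (4 * (Fintype.card S : ℝ) * L / N)
        + 9 * H ^ 2 * (Fintype.card S : ℝ) ^ 2 * L / N' := by
  have hcard_le_sq : (Fintype.card S : ℝ) ≤ (Fintype.card S : ℝ) ^ 2 := by
    exact_mod_cast Nat.le_self_pow two_ne_zero _
  set m : ℝ := (Fintype.card S : ℝ)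
  have hdist : ∑ y, |phat y - ptil y| ≤ √(4 * m * L / N) + m * (7 * L / (3 * N')) := by
    calc ∑ y, |phat y - ptil y|
        ≤ ∑ y, (√(4 * phat y * (1 - phat y) * L / N) + 7 * L / (3 * N')) :=
          sum_le_sum fun y _ => abs_sub_comm (phat y) (ptil y) ▸ hclose y
      _ ≤ √(4 * m * L / N) + m * (7 * L / (3 * N')) := by
          rw [sum_add_distrib, sum_const, card_univ, nsmul_eq_mul]
          gcongr
          exact sum_sqrt_bernstein_width_le hphat0 hphat1 hL.le (by linarith)
  have hcorrection : H ^ 2 * (m * (7 * L / (3 * N'))) ≤ 9 * H ^ 2 * m ^ 2 * L / N' := by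
    have hm : 7 / 3 * m ≤ 9 * m ^ 2 := by linarith [sq_nonneg m]
    calc H ^ 2 * (m * (7 * L / (3 * N'))) = H ^ 2 * L / N' * (7 / 3 * m) := by ring
      _ ≤ H ^ 2 * L / N' * (9 * m ^ 2) := by gcongr
      _ = 9 * H ^ 2 * m ^ 2 * L / N' := by ring
  change weightedVar phat β ≤ weightedVar ptil β + _ + _
  calc weightedVar phat β ≤ weightedVar ptil β + (H - 0) ^ 2 * ∑ y, |phat y - ptil y| :=
        weightedVar_le_add_sum_abs_sub hphat1 hptil0 hptil1 fun y => hβ y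
    _ ≤ weightedVar ptil β + H ^ 2 * (√(4 * m * L / N) + m * (7 * L / (3 * N'))) := by
        rw [sub_zero]
        gcongr
    _ ≤ weightedVar ptil β + H ^ 2 * √(4 * m * L / N) + 9 * H ^ 2 * m ^ 2 * L / N' := by
        rw [mul_add, ← add_assoc]
        gcongr

/-- If `p̃` is entrywise close to `p̂` (empirical-Bernstein widths), then
the variance of `β` under `p̂` is bounded by the variance under `p̃` plus lower-order
correction terms. -/
theorem stmt_11 {S : Type*} [Fintype S] [Nonempty S]
    (phat ptil : S → ℝ)
    (hphat0 : ∀ y, 0 ≤ phat y) (hphat1 : ∑ y, phat y = 1)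
    (hptil0 : ∀ y, 0 ≤ ptil y) (hptil1 : ∑ y, ptil y = 1)
    (H : ℝ) (hHpos : 0 ≤ H) (β : S → ℝ) (hβ : ∀ y, 0 ≤ β y ∧ β y ≤ H)
    (L N N' : ℝ) (hL : 0 < L) (hN : 1 ≤ N) (hN' : 1 ≤ N')
    (hclose : ∀ y, |ptil y - phat y|
      ≤ Real.sqrt (4 * phat y * (1 - phat y) * L / N) + 7 * L / (3 * N')) :
    ∑ y, phat y * (β y - ∑ y', phat y' * β y') ^ 2
      ≤ (∑ y, ptil y * (β y - ∑ y', ptil y' * β y') ^ 2)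
        + H ^ 2 * Real.sqrt (4 * (Fintype.card S : ℝ) * L / N)
        + 9 * H ^ 2 * (Fintype.card S : ℝ) ^ 2 * L / N' :=
  stmt_11_general phat ptil hphat0 hphat1 hptil0 hptil1 H β hβ L N N' hL hN hN' hclose
end

section
/- Let π = (π_1,…,π_H) with π_h : S → A be a policy, P and P̂ transition functions, r : S×A → ℝ a reward, and CB_h : S×A → ℝ arbitrary functions for h = 1,…,H. Define β by β_{H+1} = 0 and β_h(x) = r(x,π_h(x)) + CB_h(x,π_h(x)) + Σ_{y∈S} P̂(y|x,π_h(x)) β_{h+1}(y), and let V^π be the value function of π under P. Let ρ_h(x'|x) denote the probability that x_h = x' when x_1 = x and the process evolves as x_{l+1} ∼ P(·|x_l, π_l(x_l)); explicitly, ρ_1(x'|x) = 1{x' = x} and ρ_{h+1}(x'|x) = Σ_z ρ_h(z|x) P(x'|z,π_h(z)). Then for every x ∈ S: β_1(x) − V^π_1(x) = Σ_{h=1}^H Σ_{x'∈S} ρ_h(x'|x) · [ CB_h(x',π_h(x')) + Σ_{y∈S} ( P̂(y|x',π_h(x')) − P(y|x',π_h(x')) ) β_{h+1}(y) ]. -/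
open Finset

/-!
Write `Δ_h = ∑ₓ' ρ_h(x'|x) (β_h(x') - V^π_h(x'))` for the gap at stage `h` averaged over the
visit distribution. Subtracting the two Bellman equations gives, pointwise,
`β_h - V^π_h = CB_h + (P̂ - P) β_{h+1} + P (β_{h+1} - V^π_{h+1})`, and averaging against `ρ_h`
turns the last term into `Δ_{h+1}` because `ρ_{h+1} = ρ_h P`. Hence the `h`-th summand of the
right-hand side is `Δ_h - Δ_{h+1}`, and the sum telescopes to `Δ_1 - Δ_{H+1} = β_1(x) - V^π_1(x)`.
-/

section

variable {S : Type*} [Fintype S]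

theorem sub_eq_of_bellman_eq {b v r c : ℝ} {p q b' v' : S → ℝ}
    (hb : b = r + c + ∑ y, q y * b' y) (hv : v = r + ∑ y, p y * v' y) :
    b - v = (c + ∑ y, (q y - p y) * b' y) + ∑ y, p y * (b' y - v' y) := by
  simp only [hb, hv, sub_mul, mul_sub, sum_sub_distrib]
  ring

theorem sum_mul_sum_eq_sum_sum_mul (μ f : S → ℝ) (K : S → S → ℝ) :
    ∑ z, μ z * ∑ y, K z y * f y = ∑ y, (∑ z, μ z * K z y) * f y :=
  Matrix.dotProduct_mulVec μ K f

end

theorem sum_Icc_sub_succ (g : ℕ → ℝ) (n : ℕ) :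
    ∑ i ∈ Icc 1 n, (g i - g (i + 1)) = g 1 - g (n + 1) := by
  have h := sum_Ico_sub g (Nat.le_add_left 1 n)
  rw [Ico_add_one_right_eq_Icc, sum_sub_distrib] at h
  rw [sum_sub_distrib]
  linarith

theorem stmt_15_general {S A : Type*} [Fintype S] [DecidableEq S]
    (H : ℕ)
    (π : ℕ → S → A) (P Phat : S → A → S → ℝ)
    (r : S → A → ℝ) (CB : ℕ → S → A → ℝ)
    (β V : ℕ → S → ℝ)
    (hβtop : ∀ x, β (H + 1) x = 0)
    (hβ : ∀ h, 1 ≤ h → h ≤ H → ∀ x,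
      β h x = r x (π h x) + CB h x (π h x)
        + ∑ y, Phat x (π h x) y * β (h + 1) y)
    (hVtop : ∀ x, V (H + 1) x = 0)
    (hV : ∀ h, 1 ≤ h → h ≤ H → ∀ x,
      V h x = r x (π h x) + ∑ y, P x (π h x) y * V (h + 1) y)
    (ρ : ℕ → S → S → ℝ)
    (hρ1 : ∀ x x', ρ 1 x' x = if x' = x then 1 else 0)
    (hρ : ∀ h, 1 ≤ h → ∀ x x',
      ρ (h + 1) x' x = ∑ z, ρ h z x * P z (π h z) x') :
    ∀ x, β 1 x - V 1 x
      = ∑ h ∈ Finset.Icc 1 H, ∑ x', ρ h x' x *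
          (CB h x' (π h x')
            + ∑ y, (Phat x' (π h x') y - P x' (π h x') y) * β (h + 1) y) := by
  intro x
  set gap : ℕ → ℝ := fun h ↦ ∑ x', ρ h x' x * (β h x' - V h x') with hgap
  have hstep : ∀ h ∈ Icc 1 H, ∑ x', ρ h x' x *
      (CB h x' (π h x') + ∑ y, (Phat x' (π h x') y - P x' (π h x') y) * β (h + 1) y)
        = gap h - gap (h + 1) := by
    intro h hh
    obtain ⟨h1, hH⟩ := mem_Icc.mp hh
    have hdiff := fun x' ↦ sub_eq_of_bellman_eq (hβ h h1 hH x') (hV h h1 hH x')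
    simp only [hgap, hdiff, mul_add, sum_add_distrib, sum_mul_sum_eq_sum_sum_mul,
      ← hρ h h1]
    ring
  have hgap1 : gap 1 = β 1 x - V 1 x := by simp [hgap, hρ1]
  have hgapTop : gap (H + 1) = 0 := by simp [hgap, hβtop, hVtop]
  rw [sum_congr rfl hstep, sum_Icc_sub_succ, hgap1, hgapTop, sub_zero]

/-- Value-difference identity: the gap between the optimistic values `β`
(computed with reference model `P̂` and bonuses `CB`) and the true value `V^π` of the
policy decomposes over the stage-visit distribution `ρ`. -/
theorem stmt_15 {S A : Type*} [Fintype S] [Nonempty S] [DecidableEq S]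
    (H : ℕ) (hH : 1 ≤ H)
    (π : ℕ → S → A) (P Phat : S → A → S → ℝ)
    (hP0 : ∀ x a y, 0 ≤ P x a y) (hP1 : ∀ x a, ∑ y, P x a y = 1)
    (hPhat0 : ∀ x a y, 0 ≤ Phat x a y) (hPhat1 : ∀ x a, ∑ y, Phat x a y = 1)
    (r : S → A → ℝ) (CB : ℕ → S → A → ℝ)
    (β V : ℕ → S → ℝ)
    (hβtop : ∀ x, β (H + 1) x = 0)
    (hβ : ∀ h, 1 ≤ h → h ≤ H → ∀ x,
      β h x = r x (π h x) + CB h x (π h x)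
        + ∑ y, Phat x (π h x) y * β (h + 1) y)
    (hVtop : ∀ x, V (H + 1) x = 0)
    (hV : ∀ h, 1 ≤ h → h ≤ H → ∀ x,
      V h x = r x (π h x) + ∑ y, P x (π h x) y * V (h + 1) y)
    (ρ : ℕ → S → S → ℝ)
    (hρ1 : ∀ x x', ρ 1 x' x = if x' = x then 1 else 0)
    (hρ : ∀ h, 1 ≤ h → ∀ x x',
      ρ (h + 1) x' x = ∑ z, ρ h z x * P z (π h z) x') :
    ∀ x, β 1 x - V 1 x
      = ∑ h ∈ Finset.Icc 1 H, ∑ x', ρ h x' x *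
          (CB h x' (π h x')
            + ∑ y, (Phat x' (π h x') y - P x' (π h x') y) * β (h + 1) y) :=
  stmt_15_general H π P Phat r CB β V hβtop hβ hVtop hV ρ hρ1 hρ
end

section
/- For episodes t = 1,…,K, let π_t = (π_{1,t},…,π_{H,t}) be policies, P̂_t transition functions, CB_{h,t} : S×A → ℝ functions, and let β_t be defined by β_{H+1,t} = 0 and β_{h,t}(x) = r(x,π_{h,t}(x)) + CB_{h,t}(x,π_{h,t}(x)) + Σ_{y∈S} P̂_t(y|x,π_{h,t}(x)) β_{h+1,t}(y). Suppose optimism holds in each episode: β_{1,t}(x) ≥ V*_1(x) for all x ∈ S and all t, where V* is the optimal value function under the true transition function P. Then the (expected) regret satisfies Σ_{t=1}^K Σ_{x∈S} α(x) ( V*_1(x) − V^{π_t}_1(x) ) ≤ Σ_{t=1}^K Σ_{h=1}^H Σ_{x'∈S} ρ_{h,t}(x') · [ CB_{h,t}(x',π_{h,t}(x')) + Σ_{y∈S} ( P̂_t(y|x',π_{h,t}(x')) − P(y|x',π_{h,t}(x')) ) β_{h+1,t}(y) ], where ρ_{h,t}(x') is the probability that the state at stage h equals x' when x_1 ∼ α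 and the process evolves under P and policy π_t. -/
/-!
Optimism gives `V*₁ - V^{π_t}₁ ≤ β_{1,t} - V^{π_t}₁`. Subtracting the two Bellman recursions,
the gap `β_{h,t} - V^{π_t}_h` equals the stage-`h` bonus plus model error, plus the true-model
expectation of the gap at stage `h + 1`. Averaged against the occupancy `ρ_{h,t}`, that
expectation is the occupancy-weighted gap at stage `h + 1`, so the weighted gaps telescope
from `ρ_{1,t} = α` down to the terminal gap `0`.
-/

open Finset

theorem Finset.eq_sum_Icc_of_eq_add_succ {G : Type*} [AddCommGroup G] {m n : ℕ} (hmn : m ≤ n + 1)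
    (a e : ℕ → G) (hstep : ∀ h ∈ Icc m n, a h = e h + a (h + 1)) (hlast : a (n + 1) = 0) :
    a m = ∑ h ∈ Icc m n, e h := by
  have hdiff : ∀ h ∈ Ico m (n + 1), e h = -(a (h + 1) - a h) := fun h hh => by
    rw [hstep h (by rwa [← Ico_add_one_right_eq_Icc]), neg_sub, add_sub_cancel_right]
  rw [← Ico_add_one_right_eq_Icc, sum_congr rfl hdiff, sum_neg_distrib, sum_Ico_sub _ hmn, hlast,
    zero_sub, neg_neg]

section ValueDifference

variable {S A : Type*} [Fintype S]

theorem sum_mul_sum_kernel (μ : S → ℝ) (Q : S → S → ℝ) (f : S → ℝ) :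
    ∑ x, μ x * ∑ y, Q x y * f y = ∑ y, (∑ x, μ x * Q x y) * f y := by
  simp_rw [mul_sum, sum_mul, mul_assoc]
  exact sum_comm

theorem bellman_sub_bellman (r c : ℝ) (Qhat Q f g : S → ℝ) :
    (r + c + ∑ y, Qhat y * f y) - (r + ∑ y, Q y * g y)
      = (c + ∑ y, (Qhat y - Q y) * f y) + ∑ y, Q y * (f y - g y) := by
  simp only [sub_mul, mul_sub, sum_sub_distrib]
  ring

theorem occupancy_sum_sub_eq_sum_bonus_add_model_error (H : ℕ) (r : S → A → ℝ)
    (P Phat : S → A → S → ℝ) (π : ℕ → S → A) (CB : ℕ → S → A → ℝ) (β V ρ : ℕ → S → ℝ)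
    (hβtop : ∀ x, β (H + 1) x = 0)
    (hβ : ∀ h, 1 ≤ h → h ≤ H → ∀ x,
      β h x = r x (π h x) + CB h x (π h x) + ∑ y, Phat x (π h x) y * β (h + 1) y)
    (hVtop : ∀ x, V (H + 1) x = 0)
    (hV : ∀ h, 1 ≤ h → h ≤ H → ∀ x, V h x = r x (π h x) + ∑ y, P x (π h x) y * V (h + 1) y)
    (hρ : ∀ h, 1 ≤ h → ∀ x', ρ (h + 1) x' = ∑ z, ρ h z * P z (π h z) x') :
    ∑ x, ρ 1 x * (β 1 x - V 1 x)
      = ∑ h ∈ Icc 1 H, ∑ x', ρ h x' *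
          (CB h x' (π h x') + ∑ y, (Phat x' (π h x') y - P x' (π h x') y) * β (h + 1) y) := by
  refine eq_sum_Icc_of_eq_add_succ (by omega) (fun h => ∑ x, ρ h x * (β h x - V h x)) _
    (fun h hh => ?_) (by simp [hβtop, hVtop])
  obtain ⟨h1, hH⟩ := mem_Icc.mp hh
  have hgap : ∀ x, β h x - V h x
      = (CB h x (π h x) + ∑ y, (Phat x (π h x) y - P x (π h x) y) * β (h + 1) y)
        + ∑ y, P x (π h x) y * (β (h + 1) y - V (h + 1) y) := fun x => by
    rw [hβ h h1 hH x, hV h h1 hH x, bellman_sub_bellman]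
  simp only [hgap, mul_add, sum_add_distrib, hρ h h1]
  rw [sum_mul_sum_kernel (ρ h) fun x => P x (π h x)]

end ValueDifference

theorem stmt_16_general {S A : Type*} [Fintype S]
    (H K : ℕ)
    (α : S → ℝ) (hα0 : ∀ x, 0 ≤ α x)
    (r : S → A → ℝ)
    (P : S → A → S → ℝ)
    (π : ℕ → ℕ → S → A)
    (Phat : ℕ → S → A → S → ℝ)
    (CB : ℕ → ℕ → S → A → ℝ)
    (β : ℕ → ℕ → S → ℝ)
    (hβtop : ∀ t, 1 ≤ t → t ≤ K → ∀ x, β t (H + 1) x = 0)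
    (hβ : ∀ t, 1 ≤ t → t ≤ K → ∀ h, 1 ≤ h → h ≤ H → ∀ x,
      β t h x = r x (π t h x) + CB t h x (π t h x)
        + ∑ y, Phat t x (π t h x) y * β t (h + 1) y)
    (V : ℕ → ℕ → S → ℝ)
    (hVtop : ∀ t, 1 ≤ t → t ≤ K → ∀ x, V t (H + 1) x = 0)
    (hV : ∀ t, 1 ≤ t → t ≤ K → ∀ h, 1 ≤ h → h ≤ H → ∀ x,
      V t h x = r x (π t h x) + ∑ y, P x (π t h x) y * V t (h + 1) y)
    (Vstar : ℕ → S → ℝ)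
    -- optimism in every episode:
    (hopt : ∀ t, 1 ≤ t → t ≤ K → ∀ x, Vstar 1 x ≤ β t 1 x)
    (ρ : ℕ → ℕ → S → ℝ)
    (hρ1 : ∀ t, 1 ≤ t → t ≤ K → ∀ x', ρ t 1 x' = α x')
    (hρ : ∀ t, 1 ≤ t → t ≤ K → ∀ h, 1 ≤ h → ∀ x',
      ρ t (h + 1) x' = ∑ z, ρ t h z * P z (π t h z) x') :
    ∑ t ∈ Finset.Icc 1 K, ∑ x, α x * (Vstar 1 x - V t 1 x)
      ≤ ∑ t ∈ Finset.Icc 1 K, ∑ h ∈ Finset.Icc 1 H, ∑ x', ρ t h x' *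
          (CB t h x' (π t h x')
            + ∑ y, (Phat t x' (π t h x') y - P x' (π t h x') y) * β t (h + 1) y) := by
  refine sum_le_sum fun t ht => ?_
  obtain ⟨ht1, htK⟩ := mem_Icc.mp ht
  calc ∑ x, α x * (Vstar 1 x - V t 1 x)
      ≤ ∑ x, ρ t 1 x * (β t 1 x - V t 1 x) := sum_le_sum fun x _ => by
        rw [hρ1 t ht1 htK x]
        exact mul_le_mul_of_nonneg_left (by linarith [hopt t ht1 htK x]) (hα0 x)
    _ = _ := occupancy_sum_sub_eq_sum_bonus_add_model_error H r P (Phat t) (π t) (CB t) (β t)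
        (V t) (ρ t) (hβtop t ht1 htK) (hβ t ht1 htK) (hVtop t ht1 htK) (hV t ht1 htK)
        (hρ t ht1 htK)

/-- Generic regret bound for optimistic algorithms: if in every episode the
optimistic value function `β_t` dominates `V*₁`, then the expected regret is bounded by
the cumulative (visit-weighted) bonuses plus model-deviation terms. -/
theorem stmt_16 {S A : Type*} [Fintype S] [Fintype A] [Nonempty S] [Nonempty A]
    (H K : ℕ) (hH : 1 ≤ H) (hK : 1 ≤ K)
    (α : S → ℝ) (hα0 : ∀ x, 0 ≤ α x) (hα1 : ∑ x, α x = 1)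
    (r : S → A → ℝ) (hr : ∀ x a, 0 ≤ r x a ∧ r x a ≤ 1)
    (P : S → A → S → ℝ) (hP0 : ∀ x a y, 0 ≤ P x a y) (hP1 : ∀ x a, ∑ y, P x a y = 1)
    (π : ℕ → ℕ → S → A)
    (Phat : ℕ → S → A → S → ℝ)
    (hPhat0 : ∀ t x a y, 0 ≤ Phat t x a y) (hPhat1 : ∀ t x a, ∑ y, Phat t x a y = 1)
    (CB : ℕ → ℕ → S → A → ℝ)
    (β : ℕ → ℕ → S → ℝ)
    (hβtop : ∀ t, 1 ≤ t → t ≤ K → ∀ x, β t (H + 1) x = 0)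
    (hβ : ∀ t, 1 ≤ t → t ≤ K → ∀ h, 1 ≤ h → h ≤ H → ∀ x,
      β t h x = r x (π t h x) + CB t h x (π t h x)
        + ∑ y, Phat t x (π t h x) y * β t (h + 1) y)
    (V : ℕ → ℕ → S → ℝ)
    (hVtop : ∀ t, 1 ≤ t → t ≤ K → ∀ x, V t (H + 1) x = 0)
    (hV : ∀ t, 1 ≤ t → t ≤ K → ∀ h, 1 ≤ h → h ≤ H → ∀ x,
      V t h x = r x (π t h x) + ∑ y, P x (π t h x) y * V t (h + 1) y)
    (Vstar : ℕ → S → ℝ)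
    (hVstartop : ∀ x, Vstar (H + 1) x = 0)
    (hVstar : ∀ h, 1 ≤ h → h ≤ H → ∀ x,
      Vstar h x = (Finset.univ : Finset A).sup' Finset.univ_nonempty
        (fun a => r x a + ∑ y, P x a y * Vstar (h + 1) y))
    -- optimism in every episode:
    (hopt : ∀ t, 1 ≤ t → t ≤ K → ∀ x, Vstar 1 x ≤ β t 1 x)
    (ρ : ℕ → ℕ → S → ℝ)
    (hρ1 : ∀ t, 1 ≤ t → t ≤ K → ∀ x', ρ t 1 x' = α x')
    (hρ : ∀ t, 1 ≤ t → t ≤ K → ∀ h, 1 ≤ h → ∀ x',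
      ρ t (h + 1) x' = ∑ z, ρ t h z * P z (π t h z) x') :
    ∑ t ∈ Finset.Icc 1 K, ∑ x, α x * (Vstar 1 x - V t 1 x)
      ≤ ∑ t ∈ Finset.Icc 1 K, ∑ h ∈ Finset.Icc 1 H, ∑ x', ρ t h x' *
          (CB t h x' (π t h x')
            + ∑ y, (Phat t x' (π t h x') y - P x' (π t h x') y) * β t (h + 1) y) :=
  stmt_16_general H K α hα0 r P π Phat CB β hβtop hβ V hVtop hV Vstar hopt ρ hρ1 hρ
end

section
/- Let π be a policy, P the true transition function, P̂ a reference transition function, and ε : S×A → ℝ≥0 such that Σ_{y∈S} |P̂(y|x,a) − P(y|x,a)| ≤ ε(x,a) for all (x,a). Let β be defined by β_{H+1} = 0 and β_h(x) = r(x,π_h(x)) + CB_h(x,π_h(x)) + Σ_{y∈S} P̂(y|x,π_h(x)) β_{h+1}(y), where CB_h(x,a) = (ε(x,a)/2)·( max_{x'} β_{h+1}(x') − min_{x'} β_{h+1}(x') ) is the UCRL2 bonus, and suppose 0 ≤ β_{h}(x) ≤ H for all h and x. Then for every x ∈ S: β_1(x) − V^π_1(x) ≤ 2H · Σ_{h=1}^H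 Σ_{x'∈S} ρ_h(x'|x) · ε(x', π_h(x')), where ρ_h(·|x) are the stage-h state-visit probabilities of policy π under P started from x. -/
open Finset

/-!
Write `g_h = β_h - V^π_h` for the optimism gap. Subtracting the two Bellman recursions gives
`g_h(z) = CB_h(z, π_h z) + Σ_y (P̂ - P)(y | z, π_h z) β_{h+1}(y) + Σ_y P(y | z, π_h z) g_{h+1}(y)`.
Since `0 ≤ β_{h+1} ≤ H`, the span of `β_{h+1}` is at most `H` and the model-error term is at most
`ε H`, so `g_h(z) ≤ 2 H ε(z, π_h z) + (P g_{h+1})(z)`. Averaging against the stage-`h` occupancy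
`ρ_h(· | x)` turns the last term into the stage-`(h+1)` average of `g_{h+1}`, and the resulting
one-step inequalities telescope from `h = 1` to `h = H`, where `g_{H+1} = 0`.
-/

theorem le_sum_Ico_add_of_le_add_succ {M : Type*} [AddCommMonoid M] [PartialOrder M]
    [IsOrderedAddMonoid M] {a b : ℕ → M} {m k : ℕ} (hmk : m ≤ k)
    (hstep : ∀ h, m ≤ h → h < k → a h ≤ b h + a (h + 1)) :
    a m ≤ ∑ i ∈ Ico m k, b i + a k := by
  induction k, hmk using Nat.le_induction with
  | base => simp
  | succ k hmk ih =>
    calc a m ≤ ∑ i ∈ Ico m k, b i + a k := ih fun h hm hk => hstep h hm (by omega)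
      _ ≤ ∑ i ∈ Ico m k, b i + (b k + a (k + 1)) := by gcongr; exact hstep k hmk (by omega)
      _ = ∑ i ∈ Ico m (k + 1), b i + a (k + 1) := by rw [sum_Ico_succ_top hmk, add_assoc]

theorem Finset.sup'_sub_inf'_le {ι α : Type*} [AddCommGroup α] [LinearOrder α]
    [IsOrderedAddMonoid α] {s : Finset ι} (hs : s.Nonempty) {f : ι → α} {lo hi : α}
    (hf : ∀ i ∈ s, lo ≤ f i ∧ f i ≤ hi) :
    s.sup' hs f - s.inf' hs f ≤ hi - lo :=
  sub_le_sub (sup'_le hs f fun i hi => (hf i hi).2) (le_inf' hs f fun i hi => (hf i hi).1)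

theorem Finset.sum_mul_le_sum_abs_mul {ι : Type*} {s : Finset ι} {d f : ι → ℝ} {c : ℝ}
    (hf : ∀ i ∈ s, 0 ≤ f i ∧ f i ≤ c) :
    ∑ i ∈ s, d i * f i ≤ (∑ i ∈ s, |d i|) * c := by
  rw [sum_mul]
  refine sum_le_sum fun i hi => ?_
  calc d i * f i ≤ |d i| * f i := mul_le_mul_of_nonneg_right (le_abs_self _) (hf i hi).1
    _ ≤ |d i| * c := mul_le_mul_of_nonneg_left (hf i hi).2 (abs_nonneg _)

theorem bonus_backup_sub_backup_le {S : Type*} [Fintype S] [Nonempty S] {p q f g : S → ℝ}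
    {e c : ℝ} (R : ℝ) (hf : ∀ y, 0 ≤ f y ∧ f y ≤ c) (hpq : ∑ y, |q y - p y| ≤ e) :
    R + e / 2 * (univ.sup' univ_nonempty f - univ.inf' univ_nonempty f) + ∑ y, q y * f y
        - (R + ∑ y, p y * g y)
      ≤ 2 * c * e + ∑ y, p y * (f y - g y) := by
  have he : 0 ≤ e := (sum_nonneg fun y _ => abs_nonneg _).trans hpq
  have hc : 0 ≤ c := (hf (Classical.arbitrary S)).1.trans (hf _).2
  have hspan : e / 2 * (univ.sup' univ_nonempty f - univ.inf' univ_nonempty f) ≤ e / 2 * c := by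
    gcongr
    simpa using univ.sup'_sub_inf'_le univ_nonempty fun y _ => hf y
  have hmodel : ∑ y, (q y - p y) * f y ≤ e * c :=
    (sum_mul_le_sum_abs_mul fun y _ => hf y).trans (mul_le_mul_of_nonneg_right hpq hc)
  have hsplit : ∑ y, q y * f y - ∑ y, p y * g y
      = ∑ y, (q y - p y) * f y + ∑ y, p y * (f y - g y) := by
    rw [← sum_sub_distrib, ← sum_add_distrib]
    exact sum_congr rfl fun y _ => by ring
  linarith [mul_nonneg he hc]

section Occupancy

variable {S : Type*} [Fintype S] {K : ℕ → S → S → ℝ} {μ : ℕ → S → ℝ}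

theorem occupancy_nonneg (hK : ∀ h z y, 0 ≤ K h z y) (hμ1 : ∀ y, 0 ≤ μ 1 y)
    (hμ : ∀ h, 1 ≤ h → ∀ y, μ (h + 1) y = ∑ z, μ h z * K h z y) :
    ∀ h, 1 ≤ h → ∀ y, 0 ≤ μ h y := by
  intro h h1
  induction h, h1 using Nat.le_induction with
  | base => exact hμ1
  | succ h h1 ih =>
    intro y
    rw [hμ h h1]
    exact sum_nonneg fun z _ => mul_nonneg (ih z) (hK h z y)

theorem sum_occupancy_mul_sum_kernel (hμ : ∀ h, 1 ≤ h → ∀ y, μ (h + 1) y = ∑ z, μ h z * K h z y)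
    {h : ℕ} (h1 : 1 ≤ h) (g : S → ℝ) :
    ∑ z, μ h z * ∑ y, K h z y * g y = ∑ y, μ (h + 1) y * g y := by
  simp_rw [mul_sum, ← mul_assoc]
  rw [sum_comm]
  simp_rw [← sum_mul, hμ h h1]

theorem sum_occupancy_mul_le_sum_Icc_of_le_backup (H : ℕ) {g c : ℕ → S → ℝ}
    (hK : ∀ h z y, 0 ≤ K h z y) (hμ1 : ∀ y, 0 ≤ μ 1 y)
    (hμ : ∀ h, 1 ≤ h → ∀ y, μ (h + 1) y = ∑ z, μ h z * K h z y)
    (hg : ∀ h, 1 ≤ h → h ≤ H → ∀ z, g h z ≤ c h z + ∑ y, K h z y * g (h + 1) y)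
    (hgtop : ∀ z, g (H + 1) z = 0) :
    ∑ z, μ 1 z * g 1 z ≤ ∑ h ∈ Icc 1 H, ∑ z, μ h z * c h z := by
  have hstep : ∀ h, 1 ≤ h → h < H + 1 →
      ∑ z, μ h z * g h z ≤ ∑ z, μ h z * c h z + ∑ z, μ (h + 1) z * g (h + 1) z := by
    intro h h1 hH
    calc ∑ z, μ h z * g h z
        ≤ ∑ z, μ h z * (c h z + ∑ y, K h z y * g (h + 1) y) :=
          sum_le_sum fun z _ =>
            mul_le_mul_of_nonneg_left (hg h h1 (by omega) z) (occupancy_nonneg hK hμ1 hμ h h1 z)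
      _ = ∑ z, μ h z * c h z + ∑ z, μ (h + 1) z * g (h + 1) z := by
          rw [← sum_occupancy_mul_sum_kernel hμ h1, ← sum_add_distrib]
          exact sum_congr rfl fun z _ => mul_add _ _ _
  simpa [hgtop, Ico_add_one_right_eq_Icc] using
    le_sum_Ico_add_of_le_add_succ (by omega : 1 ≤ H + 1) hstep

end Occupancy

theorem stmt_17_general {S A : Type*} [Fintype S] [Nonempty S] [DecidableEq S]
    (H : ℕ)
    (r : S → A → ℝ)
    (π : ℕ → S → A) (P Phat : S → A → S → ℝ)
    (hP0 : ∀ x a y, 0 ≤ P x a y)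
    (ε : S → A → ℝ)
    (hεP : ∀ x a, ∑ y, |Phat x a y - P x a y| ≤ ε x a)
    (β V : ℕ → S → ℝ)
    (hβtop : ∀ x, β (H + 1) x = 0)
    (hβ : ∀ h, 1 ≤ h → h ≤ H → ∀ x,
      β h x = r x (π h x)
        + ε x (π h x) / 2 *
            ((Finset.univ : Finset S).sup' Finset.univ_nonempty (β (h + 1))
              - (Finset.univ : Finset S).inf' Finset.univ_nonempty (β (h + 1)))
        + ∑ y, Phat x (π h x) y * β (h + 1) y)
    (hβbd : ∀ h, 1 ≤ h → h ≤ H + 1 → ∀ x, 0 ≤ β h x ∧ β h x ≤ (H : ℝ))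
    (hVtop : ∀ x, V (H + 1) x = 0)
    (hV : ∀ h, 1 ≤ h → h ≤ H → ∀ x,
      V h x = r x (π h x) + ∑ y, P x (π h x) y * V (h + 1) y)
    (ρ : ℕ → S → S → ℝ)
    (hρ1 : ∀ x x', ρ 1 x' x = if x' = x then 1 else 0)
    (hρ : ∀ h, 1 ≤ h → ∀ x x',
      ρ (h + 1) x' x = ∑ z, ρ h z x * P z (π h z) x') :
    ∀ x, β 1 x - V 1 x
      ≤ 2 * (H : ℝ) * ∑ h ∈ Finset.Icc 1 H, ∑ x', ρ h x' x * ε x' (π h x') := by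
  intro x
  have hgap_step : ∀ h, 1 ≤ h → h ≤ H → ∀ z, β h z - V h z
      ≤ 2 * H * ε z (π h z) + ∑ y, P z (π h z) y * (β (h + 1) y - V (h + 1) y) := by
    intro h h1 hH z
    rw [hβ h h1 hH z, hV h h1 hH z]
    exact bonus_backup_sub_backup_le _ (hβbd (h + 1) (by omega) (by omega)) (hεP z (π h z))
  have hgap := sum_occupancy_mul_le_sum_Icc_of_le_backup (μ := fun h y => ρ h y x)
    (K := fun h z y => P z (π h z) y) (g := fun h y => β h y - V h y) H
    (fun h z y => hP0 z (π h z) y) (fun y => by rw [hρ1]; split_ifs <;> norm_num)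
    (fun h h1 y => hρ h h1 x y) hgap_step (fun z => by simp [hβtop, hVtop])
  simpa [hρ1, mul_sum, mul_left_comm] using hgap

/-- For the UCRL2-style bonus `CB_h(x,a) = (ε(x,a)/2)·span(β_{h+1})`, if the
model deviation satisfies the ℓ₁ bound `∑_y |P̂ − P| ≤ ε` and `0 ≤ β_h ≤ H`, then the
optimism gap is at most `2H` times the cumulative visit-weighted widths. -/
theorem stmt_17 {S A : Type*} [Fintype S] [Nonempty S] [DecidableEq S]
    (H : ℕ) (hH : 1 ≤ H)
    (r : S → A → ℝ) (hr : ∀ x a, 0 ≤ r x a ∧ r x a ≤ 1)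
    (π : ℕ → S → A) (P Phat : S → A → S → ℝ)
    (hP0 : ∀ x a y, 0 ≤ P x a y) (hP1 : ∀ x a, ∑ y, P x a y = 1)
    (hPhat0 : ∀ x a y, 0 ≤ Phat x a y) (hPhat1 : ∀ x a, ∑ y, Phat x a y = 1)
    (ε : S → A → ℝ) (hε0 : ∀ x a, 0 ≤ ε x a)
    (hεP : ∀ x a, ∑ y, |Phat x a y - P x a y| ≤ ε x a)
    (β V : ℕ → S → ℝ)
    (hβtop : ∀ x, β (H + 1) x = 0)
    (hβ : ∀ h, 1 ≤ h → h ≤ H → ∀ x,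
      β h x = r x (π h x)
        + ε x (π h x) / 2 *
            ((Finset.univ : Finset S).sup' Finset.univ_nonempty (β (h + 1))
              - (Finset.univ : Finset S).inf' Finset.univ_nonempty (β (h + 1)))
        + ∑ y, Phat x (π h x) y * β (h + 1) y)
    (hβbd : ∀ h, 1 ≤ h → h ≤ H + 1 → ∀ x, 0 ≤ β h x ∧ β h x ≤ (H : ℝ))
    (hVtop : ∀ x, V (H + 1) x = 0)
    (hV : ∀ h, 1 ≤ h → h ≤ H → ∀ x,
      V h x = r x (π h x) + ∑ y, P x (π h x) y * V (h + 1) y)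
    (ρ : ℕ → S → S → ℝ)
    (hρ1 : ∀ x x', ρ 1 x' x = if x' = x then 1 else 0)
    (hρ : ∀ h, 1 ≤ h → ∀ x x',
      ρ (h + 1) x' x = ∑ z, ρ h z x * P z (π h z) x') :
    ∀ x, β 1 x - V 1 x
      ≤ 2 * (H : ℝ) * ∑ h ∈ Finset.Icc 1 H, ∑ x', ρ h x' x * ε x' (π h x') :=
  stmt_17_general H r π P Phat hP0 ε hεP β V hβtop hβ hβbd hVtop hV ρ hρ1 hρ
end
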